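/- arXiv:1708.06657 — 4 statements merged into one kernel-verified Lean document; each statement's English description precedes it below -/
import Mathlib

section
/- Let Φ : ℝ^d → [0,∞) be an N_∞ function and let A_Φ be the greatest convex radial minorant of Φ. Then A_Φ is itself a radial N_∞ function; in particular A_Φ is convex, nonnegative, radial, satisfies A_Φ(0) = 0, A_Φ(x) > 0 for every x ≠ 0, and A_Φ(x)/|x| → +∞ as |x| → ∞. -/
open MeasureTheory Filter Set
open scoped ENNReal RealInnerProductSpace Topology

noncomputable section

/-- `ℝ^d` with the euclidean norm. -/
abbrev Ed (d : ℕ) : Type := EuclideanSpace ℝ (Fin d)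

/-- `Φ` is an `N_∞` function: differentiable, convex, nonnegative, vanishing exactly at `0`,
even, and superlinear at infinity. -/
def IsNInf {m : ℕ} (Φ : Ed m → ℝ) : Prop :=
  Differentiable ℝ Φ ∧ ConvexOn ℝ Set.univ Φ ∧ (∀ y, 0 ≤ Φ y) ∧ Φ 0 = 0 ∧
    (∀ y, y ≠ 0 → 0 < Φ y) ∧ (∀ y, Φ (-y) = Φ y) ∧
    Tendsto (fun y => Φ y / ‖y‖) (comap (fun y : Ed m => ‖y‖) atTop) atTop

variable {d : ℕ}

/-- The modular `ρ_Φ(u) = ∫_0^T Φ(u(t)) dt`, as an extended nonnegative real. -/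
def rhoE (T : ℝ) (Φ : Ed d → ℝ) (u : ℝ → Ed d) : ℝ≥0∞ :=
  ∫⁻ t in Icc (0:ℝ) T, ENNReal.ofReal (Φ (u t))

/-- `u ∈ L^Φ([0,T], ℝ^d)`. -/
def MemLphi (T : ℝ) (Φ : Ed d → ℝ) (u : ℝ → Ed d) : Prop :=
  AEMeasurable u (volume.restrict (Icc (0:ℝ) T)) ∧
    ∃ l : ℝ, 0 < l ∧ rhoE T Φ (fun t => l • u t) < ⊤

/-- The Luxemburg norm of `u` on `[0,T]`. -/
def luxNorm (T : ℝ) (Φ : Ed d → ℝ) (u : ℝ → Ed d) : ℝ :=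
  sInf {l : ℝ | 0 < l ∧ rhoE T Φ (fun t => l⁻¹ • u t) ≤ 1}

/-- `u ∈ W^1L^Φ([0,T], ℝ^d)` with a.e. derivative `u'` : `u` is absolutely continuous,
being the integral of the (integrable) function `u'`, and `u' ∈ L^Φ`. -/
def MemW1Lphi (T : ℝ) (Φ : Ed d → ℝ) (u u' : ℝ → Ed d) : Prop :=
  IntegrableOn u' (Icc (0:ℝ) T) ∧ MemLphi T Φ u' ∧
    ∀ t ∈ Icc (0:ℝ) T, u t = u 0 + ∫ s in (0:ℝ)..t, u' s

/-- `Ψ` is a convex, nonnegative, radial minorant of `Φ`. -/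
def RadialConvexMinorant (Φ Ψ : Ed d → ℝ) : Prop :=
  ConvexOn ℝ Set.univ Ψ ∧ (∀ x, 0 ≤ Ψ x) ∧ (∀ x y, ‖x‖ = ‖y‖ → Ψ x = Ψ y) ∧ ∀ x, Ψ x ≤ Φ x

/-- `A_Φ`, the greatest convex radial minorant of `Φ`. -/
def APhi (Φ : Ed d → ℝ) (x : Ed d) : ℝ :=
  sSup {r : ℝ | ∃ Ψ, RadialConvexMinorant Φ Ψ ∧ r = Ψ x}

/-- Eventual statements along `comap ‖·‖ atTop` are uniform norm bounds. -/
lemma ev_comap_norm {d : ℕ} {p : Ed d → Prop} :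
    (∀ᶠ y in comap (fun y : Ed d => ‖y‖) atTop, p y) ↔ ∃ R : ℝ, ∀ y : Ed d, R ≤ ‖y‖ → p y := by
  rw [eventually_comap, eventually_atTop]
  constructor
  · rintro ⟨R, hR⟩; exact ⟨R, fun y hy => hR ‖y‖ hy y rfl⟩
  · rintro ⟨R, hR⟩; exact ⟨R, fun b hb y hy => hR y (hy ▸ hb)⟩

/-- "Wedge" functions `y ↦ max (c (‖y‖ - a)) 0` are radial convex minorants of `Φ`
whenever `c ≥ 0` and `c (‖y‖ - a) ≤ Φ y` everywhere. -/
lemma wedge_rcm {d : ℕ} (Φ : Ed d → ℝ) (hpos : ∀ y, 0 ≤ Φ y) {c a : ℝ} (hc : 0 ≤ c)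
    (h : ∀ y : Ed d, c * (‖y‖ - a) ≤ Φ y) :
    RadialConvexMinorant Φ (fun y => max (c * (‖y‖ - a)) 0) := by
  refine ⟨?_, fun x => le_max_right _ _, fun x y hxy => by simp [hxy],
    fun x => max_le (h x) (hpos x)⟩
  have h1 : ConvexOn ℝ (univ : Set (Ed d)) (fun y => c * (‖y‖ - a)) := by
    have h2 := ((convexOn_univ_norm (E := Ed d)).smul hc).add
      (convexOn_const (-(c * a)) convex_univ)
    have he : (fun y : Ed d => c * (‖y‖ - a)) = fun y => c • ‖y‖ + (-(c * a)) := by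
      funext y; simp only [smul_eq_mul]; ring
    rw [he]; exact h2
  exact h1.sup (convexOn_const 0 convex_univ)

lemma aphi_set_nonempty {d : ℕ} (Φ : Ed d → ℝ) (hpos : ∀ y, 0 ≤ Φ y) (x : Ed d) :
    {r : ℝ | ∃ Ψ, RadialConvexMinorant Φ Ψ ∧ r = Ψ x}.Nonempty :=
  ⟨0, fun _ => 0, ⟨convexOn_const 0 convex_univ, fun _ => le_refl 0, fun _ _ _ => rfl,
    fun y => hpos y⟩, rfl⟩

lemma aphi_set_bdd {d : ℕ} (Φ : Ed d → ℝ) (x : Ed d) :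
    BddAbove {r : ℝ | ∃ Ψ, RadialConvexMinorant Φ Ψ ∧ r = Ψ x} :=
  ⟨Φ x, by rintro r ⟨Ψ, hΨ, rfl⟩; exact hΨ.2.2.2 x⟩

lemma le_aphi {d : ℕ} {Φ Ψ : Ed d → ℝ} (hΨ : RadialConvexMinorant Φ Ψ) (x : Ed d) :
    Ψ x ≤ APhi Φ x :=
  le_csSup (aphi_set_bdd Φ x) ⟨Ψ, hΨ, rfl⟩

/-- `A_Φ` is a radial `N_∞` function: convex, nonnegative, radial,
`A_Φ(0) = 0`, `A_Φ(x) > 0` for `x ≠ 0`, and `A_Φ(x)/‖x‖ → ∞` as `‖x‖ → ∞`. -/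
theorem statement0 {d : ℕ} (Φ : Ed d → ℝ) (hΦ : IsNInf Φ) :
    ConvexOn ℝ Set.univ (APhi Φ) ∧ (∀ x, 0 ≤ APhi Φ x) ∧
      (∀ x y, ‖x‖ = ‖y‖ → APhi Φ x = APhi Φ y) ∧ APhi Φ 0 = 0 ∧
      (∀ x, x ≠ 0 → 0 < APhi Φ x) ∧
      Tendsto (fun x => APhi Φ x / ‖x‖) (comap (fun x : Ed d => ‖x‖) atTop) atTop := by
  obtain ⟨hdiff, hconv, hpos, hzero, hpos', heven, htend⟩ := hΦ
  have hnonneg : ∀ x : Ed d, 0 ≤ APhi Φ x := fun x =>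
    le_aphi ⟨convexOn_const 0 convex_univ, fun _ => le_refl 0, fun _ _ _ => rfl,
      fun y => hpos y⟩ x
  refine ⟨?_, hnonneg, ?_, ?_, ?_, ?_⟩
  · -- convexity
    refine ⟨convex_univ, fun x _ y _ a b ha hb hab => ?_⟩
    refine csSup_le (aphi_set_nonempty Φ hpos _) ?_
    rintro r ⟨Ψ, hΨ, rfl⟩
    calc Ψ (a • x + b • y) ≤ a • Ψ x + b • Ψ y :=
          hΨ.1.2 (mem_univ x) (mem_univ y) ha hb hab
      _ ≤ a • APhi Φ x + b • APhi Φ y := by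
          simp only [smul_eq_mul]
          exact add_le_add (mul_le_mul_of_nonneg_left (le_aphi hΨ x) ha)
            (mul_le_mul_of_nonneg_left (le_aphi hΨ y) hb)
  · -- radial
    intro x y hxy
    have hsets : {r : ℝ | ∃ Ψ, RadialConvexMinorant Φ Ψ ∧ r = Ψ x}
        = {r : ℝ | ∃ Ψ, RadialConvexMinorant Φ Ψ ∧ r = Ψ y} := by
      ext r
      constructor
      · rintro ⟨Ψ, hΨ, rfl⟩; exact ⟨Ψ, hΨ, hΨ.2.2.1 x y hxy⟩
      · rintro ⟨Ψ, hΨ, rfl⟩; exact ⟨Ψ, hΨ, hΨ.2.2.1 y x hxy.symm⟩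
    unfold APhi; rw [hsets]
  · -- vanishes at 0
    refine le_antisymm ?_ (hnonneg 0)
    refine csSup_le (aphi_set_nonempty Φ hpos 0) ?_
    rintro r ⟨Ψ, hΨ, rfl⟩
    calc Ψ 0 ≤ Φ 0 := hΨ.2.2.2 0
      _ = 0 := hzero
  · -- positive away from 0
    intro x hx
    set r := ‖x‖ with hr
    have hr0 : 0 < r := norm_pos_iff.mpr hx
    obtain ⟨R₀, hR₀⟩ := ev_comap_norm.mp (htend.eventually (eventually_ge_atTop (1 : ℝ)))
    set R : ℝ := max R₀ r with hR
    have hRr : r ≤ R := le_max_right _ _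
    set K : Set (Ed d) := Metric.closedBall 0 R ∩ {y | r / 2 ≤ ‖y‖} with hKdef
    have hKc : IsCompact K := (isCompact_closedBall 0 R).inter_right
      (isClosed_le continuous_const continuous_norm)
    have hxK : x ∈ K := ⟨by simpa [Metric.mem_closedBall, dist_zero_right] using hRr,
      by simp only [mem_setOf_eq]; linarith⟩
    obtain ⟨z, hzK, hz⟩ := hKc.exists_isMinOn ⟨x, hxK⟩ hdiff.continuous.continuousOn
    have hz0 : z ≠ 0 := by
      intro h0
      have := hzK.2
      rw [h0] at this
      simp only [mem_setOf_eq, norm_zero] at this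
      linarith
    have hδ : 0 < Φ z := hpos' z hz0
    have hRr2 : 0 < R - r / 2 := by linarith
    set c : ℝ := min (Φ z / (R - r / 2)) 1 with hcdef
    have hc : 0 < c := lt_min (div_pos hδ hRr2) one_pos
    have hmin : ∀ y : Ed d, c * (‖y‖ - r / 2) ≤ Φ y := by
      intro y
      rcases le_or_gt ‖y‖ (r / 2) with h | h
      · have : c * (‖y‖ - r / 2) ≤ 0 := mul_nonpos_of_nonneg_of_nonpos hc.le (by linarith)
        linarith [hpos y]
      · rcases le_or_gt ‖y‖ R with h2 | h2
        · have hyK : y ∈ K := ⟨by simpa [Metric.mem_closedBall, dist_zero_right] using h2,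
            le_of_lt h⟩
          have hzy : Φ z ≤ Φ y := hz hyK
          have hcb : c ≤ Φ z / (R - r / 2) := min_le_left _ _
          have : c * (‖y‖ - r / 2) ≤ (Φ z / (R - r / 2)) * (R - r / 2) := by
            apply mul_le_mul hcb (by linarith) (by linarith) (le_of_lt (div_pos hδ hRr2))
          rw [div_mul_cancel₀ _ (ne_of_gt hRr2)] at this
          linarith
        · have hR0y : R₀ ≤ ‖y‖ := le_trans (le_max_left _ _) h2.le
          have h3 : (1 : ℝ) ≤ Φ y / ‖y‖ := hR₀ y hR0y
          have hy0 : (0 : ℝ) < ‖y‖ := by linarith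
          have h4 : ‖y‖ ≤ Φ y := by
            have := (le_div_iff₀ hy0).mp h3
            linarith
          have hc1 : c ≤ 1 := min_le_right _ _
          nlinarith
    have hrcm := wedge_rcm Φ hpos hc.le hmin
    have hval : 0 < c * (r - r / 2) := mul_pos hc (by linarith)
    calc (0 : ℝ) < c * (r - r / 2) := hval
      _ ≤ max (c * (‖x‖ - r / 2)) 0 := by rw [← hr]; exact le_max_left _ _
      _ ≤ APhi Φ x := le_aphi hrcm x
  · -- superlinear
    rw [tendsto_atTop]
    intro M
    set C : ℝ := max M 1 with hCdef
    have hC1 : (1 : ℝ) ≤ C := le_max_right _ _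
    have hCM : M ≤ C := le_max_left _ _
    obtain ⟨R₀, hR₀⟩ := ev_comap_norm.mp (htend.eventually (eventually_ge_atTop (2 * C)))
    set R : ℝ := max R₀ 0 with hRdef
    have hR0 : 0 ≤ R := le_max_right _ _
    have hmin : ∀ y : Ed d, (2 * C) * (‖y‖ - R) ≤ Φ y := by
      intro y
      rcases le_or_gt ‖y‖ R with h | h
      · have : (2 * C) * (‖y‖ - R) ≤ 0 :=
          mul_nonpos_of_nonneg_of_nonpos (by linarith) (by linarith)
        linarith [hpos y]
      · have hR0y : R₀ ≤ ‖y‖ := le_trans (le_max_left _ _) h.le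
        have h3 : 2 * C ≤ Φ y / ‖y‖ := hR₀ y hR0y
        have hy0 : (0 : ℝ) < ‖y‖ := lt_of_le_of_lt hR0 h
        have h4 : 2 * C * ‖y‖ ≤ Φ y := (le_div_iff₀ hy0).mp h3
        nlinarith
    have hrcm := wedge_rcm Φ hpos (by linarith : (0:ℝ) ≤ 2 * C) hmin
    rw [ev_comap_norm]
    refine ⟨max (2 * R) 1, fun x hx => ?_⟩
    have hx1 : (1 : ℝ) ≤ ‖x‖ := le_trans (le_max_right _ _) hx
    have hx2 : 2 * R ≤ ‖x‖ := le_trans (le_max_left _ _) hx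
    have hx0 : (0 : ℝ) < ‖x‖ := by linarith
    have hge : 2 * C * (‖x‖ - R) ≤ APhi Φ x :=
      le_trans (le_max_left _ _) (le_aphi hrcm x)
    rw [le_div_iff₀ hx0]
    nlinarith
end
end

section
/- (Morrey's inequality) Let Φ : ℝ^d → [0,∞) be an N_∞ function, A_Φ its greatest convex radial minorant, identified with the invertible increasing function Ā : [0,∞) → [0,∞) via A_Φ(x) = Ā(|x|). For every u ∈ W^1L^Φ([0,T],ℝ^d) and all s, t ∈ [0,T] with s ≠ t one has |u(t) − u(s)| ≤ |t − s| · Ā^{−1}(1/|t − s|) · ‖u'‖_{L^Φ}. -/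
open MeasureTheory Filter Set
open scoped ENNReal RealInnerProductSpace Topology

noncomputable section

variable {d : ℕ}

/-! Fix an admissible level `l` for `u'`, i.e. `ρ_Φ(u'/l) ≤ 1`, and let `w` be the average of
`u'/l` over `[s, t]`. Jensen's inequality for every convex radial minorant of `Φ` gives
`A_Φ(w) ≤ ⨍ Φ(u'/l) ≤ 1/|t - s|`. A convex function vanishing at `0` grows at least linearly
along rays, so the sublevel set `{A_Φ ≤ r}` lies in the ball of radius `Ā⁻¹(r)`; hence
`|u(t) - u(s)| = |t - s| l |w| ≤ |t - s| Ā⁻¹(1/|t - s|) l`, and the infimum over `l` is the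
Luxemburg norm. -/

lemma ConvexOn.map_smul_le_of_map_zero {E : Type*} [AddCommGroup E] [Module ℝ E] {f : E → ℝ}
    (hf : ConvexOn ℝ univ f) (hf0 : f 0 = 0) {c : ℝ} (hc0 : 0 ≤ c) (hc1 : c ≤ 1) (x : E) :
    f (c • x) ≤ c * f x := by
  simpa [hf0] using hf.2 (mem_univ x) (mem_univ 0) hc0 (sub_nonneg.2 hc1) (add_sub_cancel c 1)

section RadialMinorant

variable {d : ℕ} {Φ Ψ : Ed d → ℝ}

lemma radialConvexMinorant_zero (hΦnn : ∀ y, 0 ≤ Φ y) : RadialConvexMinorant Φ 0 :=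
  ⟨convexOn_const 0 convex_univ, fun _ => le_rfl, fun _ _ _ => rfl, hΦnn⟩

lemma RadialConvexMinorant.map_zero (hΨ : RadialConvexMinorant Φ Ψ) (hΦ0 : Φ 0 = 0) :
    Ψ 0 = 0 :=
  le_antisymm ((hΨ.2.2.2 0).trans hΦ0.le) (hΨ.2.1 0)

lemma bddAbove_radialConvexMinorant_apply (x : Ed d) :
    BddAbove {r : ℝ | ∃ Ψ, RadialConvexMinorant Φ Ψ ∧ r = Ψ x} :=
  ⟨Φ x, by rintro r ⟨Ψ, hΨ, rfl⟩; exact hΨ.2.2.2 x⟩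

lemma RadialConvexMinorant.le_APhi (hΨ : RadialConvexMinorant Φ Ψ) (x : Ed d) :
    Ψ x ≤ APhi Φ x :=
  le_csSup (bddAbove_radialConvexMinorant_apply x) ⟨Ψ, hΨ, rfl⟩

lemma APhi_nonneg (hΦnn : ∀ y, 0 ≤ Φ y) (x : Ed d) : 0 ≤ APhi Φ x :=
  (radialConvexMinorant_zero hΦnn).le_APhi x

lemma APhi_le {x : Ed d} {a : ℝ} (ha : 0 ≤ a)
    (h : ∀ Ψ, RadialConvexMinorant Φ Ψ → Ψ x ≤ a) : APhi Φ x ≤ a :=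
  Real.sSup_le (by rintro r ⟨Ψ, hΨ, rfl⟩; exact h Ψ hΨ) ha

lemma APhi_smul_le (hΦnn : ∀ y, 0 ≤ Φ y) (hΦ0 : Φ 0 = 0) {θ : ℝ} (hθ0 : 0 ≤ θ) (hθ1 : θ ≤ 1)
    (w : Ed d) : APhi Φ (θ • w) ≤ θ * APhi Φ w :=
  APhi_le (mul_nonneg hθ0 (APhi_nonneg hΦnn w)) fun Ψ hΨ =>
    calc Ψ (θ • w) ≤ θ * Ψ w := hΨ.1.map_smul_le_of_map_zero (hΨ.map_zero hΦ0) hθ0 hθ1 w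
      _ ≤ θ * APhi Φ w := mul_le_mul_of_nonneg_left (hΨ.le_APhi w) hθ0

lemma norm_le_of_APhi_le (hΦnn : ∀ y, 0 ≤ Φ y) (hΦ0 : Φ 0 = 0) {r R : ℝ} (hr : 0 < r)
    (hR : 0 ≤ R) (hAR : ∀ x : Ed d, ‖x‖ = R → APhi Φ x = r) {w : Ed d}
    (hw : APhi Φ w ≤ r) : ‖w‖ ≤ R := by
  by_contra! hRw
  have hw0 : 0 < ‖w‖ := hR.trans_lt hRw
  set θ := R / ‖w‖
  have hθ0 : 0 ≤ θ := div_nonneg hR hw0.le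
  have hθ1 : θ < 1 := (div_lt_one hw0).2 hRw
  have hθw : ‖θ • w‖ = R := by
    rw [norm_smul, Real.norm_of_nonneg hθ0, div_mul_cancel₀ _ hw0.ne']
  have : r ≤ θ * r :=
    calc r = APhi Φ (θ • w) := (hAR _ hθw).symm
      _ ≤ θ * APhi Φ w := APhi_smul_le hΦnn hΦ0 hθ0 hθ1.le w
      _ ≤ θ * r := mul_le_mul_of_nonneg_left hw hθ0
  exact this.not_gt (mul_lt_of_lt_one_left hr hθ1)

variable {α : Type*} [MeasurableSpace α] {μ : Measure α} [IsFiniteMeasure μ] [NeZero μ]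

lemma APhi_average_le (hΦnn : ∀ y, 0 ≤ Φ y) {v : α → Ed d} (hv : Integrable v μ)
    (hΦv : Integrable (fun a => Φ (v a)) μ) : APhi Φ (⨍ a, v a ∂μ) ≤ ⨍ a, Φ (v a) ∂μ := by
  refine APhi_le (integral_nonneg fun a => hΦnn _) fun Ψ hΨ => ?_
  have hΨcont : Continuous Ψ := continuousOn_univ.1 (hΨ.1.continuousOn isOpen_univ)
  have hΨv : Integrable (fun a => Ψ (v a)) μ :=
    hΦv.mono' (hΨcont.comp_aestronglyMeasurable hv.aestronglyMeasurable) (Eventually.of_forall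
      fun a => (Real.norm_of_nonneg (hΨ.2.1 _)).trans_le (hΨ.2.2.2 _))
  calc Ψ (⨍ a, v a ∂μ) ≤ ⨍ a, Ψ (v a) ∂μ :=
        hΨ.1.map_average_le hΨcont.continuousOn isClosed_univ
          (Eventually.of_forall fun _ => mem_univ _) hv hΨv
    _ ≤ ⨍ a, Φ (v a) ∂μ := by
        simp only [average_eq]
        exact smul_le_smul_of_nonneg_left (integral_mono hΨv hΦv fun a => hΨ.2.2.2 _)
          (inv_nonneg.2 measureReal_nonneg)

lemma norm_integral_le_of_lintegral_le_one (hΦcont : Continuous Φ) (hΦnn : ∀ y, 0 ≤ Φ y)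
    (hΦ0 : Φ 0 = 0) {R : ℝ} (hR : 0 ≤ R) (hAR : ∀ x : Ed d, ‖x‖ = R → APhi Φ x = (μ.real univ)⁻¹)
    {v : α → Ed d} (hv : Integrable v μ) (hmod : ∫⁻ a, ENNReal.ofReal (Φ (v a)) ∂μ ≤ 1) :
    ‖∫ a, v a ∂μ‖ ≤ μ.real univ * R := by
  have hμ : 0 < μ.real univ := measureReal_univ_pos
  have hΦv_meas : AEStronglyMeasurable (fun a => Φ (v a)) μ :=
    hΦcont.comp_aestronglyMeasurable hv.aestronglyMeasurable
  have hΦv : Integrable (fun a => Φ (v a)) μ :=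
    ⟨hΦv_meas, (hasFiniteIntegral_iff_ofReal (Eventually.of_forall fun a => hΦnn _)).2
      (hmod.trans_lt ENNReal.one_lt_top)⟩
  have hint : ∫ a, Φ (v a) ∂μ ≤ 1 := by
    rw [integral_eq_lintegral_of_nonneg_ae (Eventually.of_forall fun a => hΦnn _) hΦv_meas]
    exact ENNReal.toReal_le_of_le_ofReal zero_le_one (by simpa using hmod)
  have havg : APhi Φ (⨍ a, v a ∂μ) ≤ (μ.real univ)⁻¹ :=
    calc APhi Φ (⨍ a, v a ∂μ) ≤ ⨍ a, Φ (v a) ∂μ := APhi_average_le hΦnn hv hΦv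
      _ ≤ (μ.real univ)⁻¹ := by
        rw [average_eq, smul_eq_mul]
        exact mul_le_of_le_one_right (inv_nonneg.2 hμ.le) hint
  rw [← measure_smul_average, norm_smul, Real.norm_of_nonneg hμ.le]
  exact mul_le_mul_of_nonneg_left
    (norm_le_of_APhi_le hΦnn hΦ0 (inv_pos.2 hμ) hR hAR havg) hμ.le

end RadialMinorant

section Luxemburg

variable {d : ℕ} {T : ℝ} {Φ : Ed d → ℝ} {u : ℝ → Ed d}

lemma rhoE_smul_le (hΦconv : ConvexOn ℝ univ Φ) (hΦ0 : Φ 0 = 0) {c : ℝ} (hc0 : 0 ≤ c)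
    (hc1 : c ≤ 1) : rhoE T Φ (fun t => c • u t) ≤ ENNReal.ofReal c * rhoE T Φ u := by
  rw [rhoE, rhoE, ← lintegral_const_mul' _ _ ENNReal.ofReal_ne_top]
  refine lintegral_mono fun t => ?_
  rw [← ENNReal.ofReal_mul hc0]
  exact ENNReal.ofReal_le_ofReal (hΦconv.map_smul_le_of_map_zero hΦ0 hc0 hc1 _)

lemma MemLphi.exists_rhoE_inv_smul_le_one (hu : MemLphi T Φ u) (hΦconv : ConvexOn ℝ univ Φ)
    (hΦ0 : Φ 0 = 0) : ∃ l : ℝ, 0 < l ∧ rhoE T Φ (fun t => l⁻¹ • u t) ≤ 1 := by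
  obtain ⟨-, l₀, hl₀, hfin⟩ := hu
  set k := (rhoE T Φ (fun t => l₀ • u t)).toReal + 1
  have hk1 : 1 ≤ k := le_add_of_nonneg_left ENNReal.toReal_nonneg
  have hk0 : 0 < k := one_pos.trans_le hk1
  refine ⟨k / l₀, div_pos hk0 hl₀, ?_⟩
  have hscale : ∀ t, (k / l₀)⁻¹ • u t = k⁻¹ • l₀ • u t := fun t => by
    rw [smul_smul, inv_div, div_eq_inv_mul]
  calc rhoE T Φ (fun t => (k / l₀)⁻¹ • u t)
      ≤ ENNReal.ofReal k⁻¹ * rhoE T Φ (fun t => l₀ • u t) := by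
        simp only [hscale]
        exact rhoE_smul_le hΦconv hΦ0 (inv_nonneg.2 hk0.le) (inv_le_one_of_one_le₀ hk1)
    _ ≤ 1 := by
        rw [← ENNReal.ofReal_toReal hfin.ne, ← ENNReal.ofReal_mul (inv_nonneg.2 hk0.le),
          ENNReal.ofReal_le_one, inv_mul_le_iff₀ hk0, mul_one]
        exact le_add_of_nonneg_right zero_le_one

lemma le_mul_luxNorm {a C : ℝ} (hne : ∃ l : ℝ, 0 < l ∧ rhoE T Φ (fun t => l⁻¹ • u t) ≤ 1)
    (hC : 0 ≤ C) (h : ∀ l : ℝ, 0 < l → rhoE T Φ (fun t => l⁻¹ • u t) ≤ 1 → a ≤ C * l) :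
    a ≤ C * luxNorm T Φ u := by
  rw [luxNorm, ← smul_eq_mul, ← Real.sInf_smul_of_nonneg hC]
  obtain ⟨l, hl⟩ := hne
  refine le_csInf ⟨C • l, smul_mem_smul_set hl⟩ ?_
  rintro _ ⟨l, ⟨hl, hρ⟩, rfl⟩
  exact h l hl hρ

end Luxemburg

section Sobolev

variable {d : ℕ} {T : ℝ} {Φ : Ed d → ℝ} {u u' : ℝ → Ed d}

lemma MemW1Lphi.sub_eq_intervalIntegral (hu : MemW1Lphi T Φ u u') {s t : ℝ}
    (hs : s ∈ Icc 0 T) (ht : t ∈ Icc 0 T) :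
    u t - u s = ∫ x in s..t, u' x := by
  have h0 : (0 : ℝ) ∈ Icc 0 T := ⟨le_rfl, hs.1.trans hs.2⟩
  have hint : ∀ r ∈ Icc 0 T, IntervalIntegrable u' volume 0 r := fun r hr =>
    (hu.1.mono_set (uIcc_subset_Icc h0 hr)).intervalIntegrable
  rw [hu.2.2 t ht, hu.2.2 s hs, add_sub_add_left_eq_sub,
    intervalIntegral.integral_interval_sub_left (hint t ht) (hint s hs)]

lemma MemW1Lphi.norm_sub_le_of_lt (hΦconv : ConvexOn ℝ univ Φ) (hΦnn : ∀ y, 0 ≤ Φ y)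
    (hΦ0 : Φ 0 = 0) (hu : MemW1Lphi T Φ u u') {s t : ℝ} (hs : s ∈ Icc 0 T)
    (ht : t ∈ Icc 0 T) (hst : s < t) {R : ℝ} (hR : 0 ≤ R)
    (hAR : ∀ x : Ed d, ‖x‖ = R → APhi Φ x = (t - s)⁻¹) :
    ‖u t - u s‖ ≤ (t - s) * R * luxNorm T Φ u' := by
  set μ := volume.restrict (Ioc s t)
  have hμ : μ.real univ = t - s := by
    rw [measureReal_restrict_apply_univ, Real.volume_real_Ioc_of_le hst.le]
  have : IsFiniteMeasure μ := isFiniteMeasure_restrict.2 measure_Ioc_lt_top.ne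
  have : NeZero μ := ⟨by
    rw [Ne, Measure.restrict_eq_zero, Real.volume_Ioc, ENNReal.ofReal_eq_zero, not_le]
    exact sub_pos.2 hst⟩
  have hIoc : Ioc s t ⊆ Icc 0 T := fun x hx => ⟨hs.1.trans hx.1.le, hx.2.trans ht.2⟩
  refine le_mul_luxNorm (hu.2.1.exists_rhoE_inv_smul_le_one hΦconv hΦ0)
    (mul_nonneg (sub_nonneg.2 hst.le) hR) fun l hl hmod => ?_
  have hΔ : u t - u s = l • ∫ x, l⁻¹ • u' x ∂μ := by
    rw [integral_smul, smul_inv_smul₀ hl.ne', hu.sub_eq_intervalIntegral hs ht,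
      intervalIntegral.integral_of_le hst.le]
  have hbound : ‖∫ x, l⁻¹ • u' x ∂μ‖ ≤ (t - s) * R :=
    hμ ▸ norm_integral_le_of_lintegral_le_one (μ := μ) (v := fun x => l⁻¹ • u' x)
      (continuousOn_univ.1 (hΦconv.continuousOn isOpen_univ)) hΦnn hΦ0 hR (hμ ▸ hAR)
      ((hu.1.mono_set hIoc).smul l⁻¹) ((lintegral_mono_set hIoc).trans hmod)
  rw [hΔ, norm_smul, Real.norm_of_nonneg hl.le, mul_comm]
  exact mul_le_mul_of_nonneg_right hbound hl.le

end Sobolev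

theorem statement2_general {d : ℕ} (T : ℝ) (Φ : Ed d → ℝ) (hΦ : IsNInf Φ)
    (Abar AbarInv : ℝ → ℝ)
    (hAbar : ∀ x : Ed d, Abar ‖x‖ = APhi Φ x)
    (hAbarInv : ∀ r ∈ Ici (0:ℝ), AbarInv r ∈ Ici (0:ℝ) ∧ Abar (AbarInv r) = r)
    (u u' : ℝ → Ed d) (hu : MemW1Lphi T Φ u u')
    (s t : ℝ) (hs : s ∈ Icc (0:ℝ) T) (ht : t ∈ Icc (0:ℝ) T) (hst : s ≠ t) :
    ‖u t - u s‖ ≤ |t - s| * AbarInv (1 / |t - s|) * luxNorm T Φ u' := by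
  wlog hlt : s < t generalizing s t
  · rw [norm_sub_rev, abs_sub_comm]
    exact this t s ht hs hst.symm (lt_of_le_of_ne (not_lt.1 hlt) hst.symm)
  obtain ⟨-, hΦconv, hΦnn, hΦ0, -⟩ := hΦ
  obtain ⟨hR, hAR⟩ := hAbarInv (t - s)⁻¹ (inv_nonneg.2 (sub_nonneg.2 hlt.le))
  rw [abs_of_pos (sub_pos.2 hlt), one_div]
  exact hu.norm_sub_le_of_lt hΦconv hΦnn hΦ0 hs ht hlt hR fun x hx => by
    rw [← hAbar, hx, hAR]

/-- **Morrey's inequality.** If `Ā : [0,∞) → [0,∞)` realizes the radial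
function `A_Φ` (i.e. `Ā(‖x‖) = A_Φ(x)`) and `Ā⁻¹` is its inverse on `[0,∞)`, then for
`u ∈ W^1L^Φ` and `s ≠ t` in `[0,T]`:
`|u(t) − u(s)| ≤ |t − s| ⬝ Ā⁻¹(1/|t−s|) ⬝ ‖u'‖_{L^Φ}`. -/
theorem statement2 {d : ℕ} (T : ℝ) (hT : 0 < T) (Φ : Ed d → ℝ) (hΦ : IsNInf Φ)
    (Abar AbarInv : ℝ → ℝ)
    (hAbar : ∀ x : Ed d, Abar ‖x‖ = APhi Φ x)
    (hAbarInv : ∀ r ∈ Ici (0:ℝ), AbarInv r ∈ Ici (0:ℝ) ∧ Abar (AbarInv r) = r)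
    (u u' : ℝ → Ed d) (hu : MemW1Lphi T Φ u u')
    (s t : ℝ) (hs : s ∈ Icc (0:ℝ) T) (ht : t ∈ Icc (0:ℝ) T) (hst : s ≠ t) :
    ‖u t - u s‖ ≤ |t - s| * AbarInv (1 / |t - s|) * luxNorm T Φ u' :=
  statement2_general T Φ hΦ Abar AbarInv hAbar hAbarInv u u' hu s t hs ht hst
end
end

section
/- (Anisotropic Poincaré–Wirtinger inequality) Let Φ : ℝ^d → [0,∞) be an N_∞ function and u ∈ W^1L^Φ([0,T],ℝ^d). Writing ũ(t) = u(t) − (1/T)∫_0^T u(s) ds, one has for every t ∈ [0,T]: Φ(ũ(t)) ≤ (1/T) ∫_0^T Φ(T u'(r)) dr. -/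
open MeasureTheory Filter Set
open scoped ENNReal RealInnerProductSpace Topology

noncomputable section

variable {d : ℕ}

/-!
For `s ≤ t` in `[0, T]` one has `u t - u s = T⁻¹ • ∫ T • 1_(s,t] u'` over `[0, T]`, so Jensen's
inequality for the uniform measure on `[0, T]` (with `Φ 0 = 0`, `Φ ≥ 0`) gives
`Φ (u t - u s) ≤ T⁻¹ ∫_0^T Φ (T u')`; evenness of `Φ` covers `s > t`. Now `u t - ū` is the
average of `s ↦ u t - u s`, whose values lie in the closed convex sublevel set
`{Φ ≤ T⁻¹ ∫_0^T Φ (T u')}`, hence so does the average.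
-/

section Jensen

variable {α E : Type*} [MeasurableSpace α] {μ : Measure α} [IsFiniteMeasure μ] [NeZero μ]
  [NormedAddCommGroup E] [NormedSpace ℝ E] [CompleteSpace E] {Φ : E → ℝ} {f : α → E}

theorem ConvexOn.map_average_le_of_ae_le (hconv : ConvexOn ℝ univ Φ)
    (hlsc : LowerSemicontinuous Φ) (hf : Integrable f μ) {C : ℝ} (hC : ∀ᵐ x ∂μ, Φ (f x) ≤ C) :
    Φ (⨍ x, f x ∂μ) ≤ C := by
  have hclosed : IsClosed {y ∈ univ | Φ y ≤ C} := by
    simpa only [mem_univ, true_and, preimage, mem_Iic] using hlsc.isClosed_preimage C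
  exact ((hconv.convex_le C).average_mem hclosed (hC.mono fun x hx => ⟨mem_univ _, hx⟩) hf).2

/-- Jensen's inequality for `s.indicator f`; `Φ 0 = 0` makes `Φ ∘ s.indicator f` vanish
off `s`. -/
theorem ConvexOn.map_smul_setIntegral_le (hconv : ConvexOn ℝ univ Φ) (hcont : Continuous Φ)
    (h0 : Φ 0 = 0) {s : Set α} (hs : MeasurableSet s) (hf : Integrable f μ)
    (hΦf : Integrable (fun x => Φ (f x)) μ) :
    Φ ((μ.real univ)⁻¹ • ∫ x in s, f x ∂μ) ≤ (μ.real univ)⁻¹ * ∫ x in s, Φ (f x) ∂μ := by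
  have hcomp : Φ ∘ s.indicator f = s.indicator (fun x => Φ (f x)) :=
    (Set.indicator_comp_of_zero h0).symm
  have := hconv.map_average_le hcont.continuousOn isClosed_univ
    (Eventually.of_forall fun x => mem_univ (s.indicator f x)) (hf.indicator hs)
    (hcomp ▸ hΦf.indicator hs)
  simpa only [average_eq, integral_indicator hs, smul_eq_mul, ← Function.comp_apply (f := Φ),
    hcomp] using this

end Jensen

section Primitive

variable {E : Type*} [NormedAddCommGroup E] [NormedSpace ℝ E]
  {u u' : ℝ → E} {T : ℝ}

theorem sub_eq_setIntegral_Ioc_of_eq_add_integral (hu' : IntegrableOn u' (Icc 0 T))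
    (hu : ∀ t ∈ Icc (0:ℝ) T, u t = u 0 + ∫ s in (0:ℝ)..t, u' s) {a b : ℝ}
    (ha : a ∈ Icc (0:ℝ) T) (hb : b ∈ Icc (0:ℝ) T) (hab : a ≤ b) :
    u b - u a = ∫ r in Ioc a b, u' r := by
  have hint : ∀ c ∈ Icc (0:ℝ) T, IntervalIntegrable u' volume 0 c := fun c hc =>
    (hu'.mono_set (by rw [uIcc_of_le hc.1]; exact Icc_subset_Icc_right hc.2)).intervalIntegrable
  rw [hu b hb, hu a ha, add_sub_add_left_eq_sub,
    intervalIntegral.integral_interval_sub_left (hint b hb) (hint a ha),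
    intervalIntegral.integral_of_le hab]

theorem continuousOn_of_eq_add_integral (hu' : IntegrableOn u' (Icc 0 T))
    (hu : ∀ t ∈ Icc (0:ℝ) T, u t = u 0 + ∫ s in (0:ℝ)..t, u' s) (hT : 0 ≤ T) :
    ContinuousOn u (Icc 0 T) := by
  rw [← uIcc_of_le hT] at hu' ⊢
  exact (continuousOn_const.add (intervalIntegral.continuousOn_primitive_interval hu')).congr
    fun t ht => hu t (uIcc_of_le hT ▸ ht)

theorem map_sub_le_inv_mul_integral [CompleteSpace E] {Φ : E → ℝ} (hconv : ConvexOn ℝ univ Φ)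
    (hcont : Continuous Φ) (hnonneg : ∀ y, 0 ≤ Φ y) (h0 : Φ 0 = 0) (heven : ∀ y, Φ (-y) = Φ y)
    (hT : 0 < T) (hu' : IntegrableOn u' (Icc 0 T))
    (hu : ∀ t ∈ Icc (0:ℝ) T, u t = u 0 + ∫ s in (0:ℝ)..t, u' s)
    (hΦu' : IntegrableOn (fun r => Φ (T • u' r)) (Icc 0 T)) {s t : ℝ}
    (hs : s ∈ Icc (0:ℝ) T) (ht : t ∈ Icc (0:ℝ) T) :
    Φ (u t - u s) ≤ T⁻¹ * ∫ r in Icc 0 T, Φ (T • u' r) := by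
  wlog hst : s ≤ t generalizing s t
  · rw [← neg_sub, heven]
    exact this ht hs (le_of_not_ge hst)
  have : NeZero (volume.restrict (Icc (0:ℝ) T)) := ⟨by simp [hT]⟩
  have hsub : Ioc s t ⊆ Icc 0 T := Ioc_subset_Icc_self.trans (Icc_subset_Icc hs.1 ht.2)
  have hvol : (volume.restrict (Icc (0:ℝ) T)).real univ = T := by simp [hT.le]
  have hjensen := hconv.map_smul_setIntegral_le (f := fun r => T • u' r) hcont h0
    (measurableSet_Ioc (a := s) (b := t)) (hu'.smul T) hΦu'
  rw [Measure.restrict_restrict measurableSet_Ioc, inter_eq_left.2 hsub, hvol, integral_smul,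
    smul_smul, inv_mul_cancel₀ hT.ne', one_smul,
    ← sub_eq_setIntegral_Ioc_of_eq_add_integral hu' hu hs ht hst] at hjensen
  refine hjensen.trans (mul_le_mul_of_nonneg_left ?_ (inv_nonneg.2 hT.le))
  exact setIntegral_mono_set hΦu' (Eventually.of_forall fun _ => hnonneg _) hsub.eventuallyLE

end Primitive

theorem integrableOn_of_rhoE_ne_top {T : ℝ} {Φ : Ed d → ℝ} {v : ℝ → Ed d}
    (hcont : Continuous Φ) (hnonneg : ∀ y, 0 ≤ Φ y)
    (hv : AEStronglyMeasurable v (volume.restrict (Icc 0 T))) (hρ : rhoE T Φ v ≠ ⊤) :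
    IntegrableOn (fun r => Φ (v r)) (Icc 0 T) :=
  ⟨hcont.comp_aestronglyMeasurable hv,
    (hasFiniteIntegral_iff_ofReal (Eventually.of_forall fun _ => hnonneg _)).2 hρ.lt_top⟩

/-- **Anisotropic Poincaré–Wirtinger inequality.** For `u ∈ W^1L^Φ` and
every `t ∈ [0,T]`: `Φ(ũ(t)) ≤ (1/T) ∫_0^T Φ(T u'(r)) dr` (the right-hand side being
an extended nonnegative real). -/
theorem statement5 {d : ℕ} (T : ℝ) (hT : 0 < T) (Φ : Ed d → ℝ) (hΦ : IsNInf Φ)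
    (u u' : ℝ → Ed d) (hu : MemW1Lphi T Φ u u') (t : ℝ) (ht : t ∈ Icc (0:ℝ) T) :
    ENNReal.ofReal (Φ (u t - T⁻¹ • ∫ s in Icc (0:ℝ) T, u s)) ≤
      ENNReal.ofReal T⁻¹ * rhoE T Φ (fun r => T • u' r) := by
  obtain ⟨hΦdiff, hΦconv, hΦnonneg, hΦ0, -, hΦeven, -⟩ := hΦ
  obtain ⟨hu'int, -, hu_eq⟩ := hu
  by_cases hρ : rhoE T Φ (fun r => T • u' r) = ⊤
  · simp [hρ, hT]
  have hΦu' : IntegrableOn (fun r => Φ (T • u' r)) (Icc 0 T) :=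
    integrableOn_of_rhoE_ne_top hΦdiff.continuous hΦnonneg (hu'int.1.const_smul T) hρ
  have hu_int : IntegrableOn u (Icc 0 T) :=
    (continuousOn_of_eq_add_integral hu'int hu_eq hT.le).integrableOn_compact isCompact_Icc
  have : NeZero (volume.restrict (Icc (0:ℝ) T)) := ⟨by simp [hT]⟩
  have hmean : u t - T⁻¹ • ∫ s in Icc 0 T, u s = ⨍ s in Icc 0 T, (u t - u s) := by
    rw [average_eq, integral_sub (integrable_const _) hu_int, integral_const, smul_sub,
      measureReal_restrict_apply_univ, Real.volume_real_Icc_of_le hT.le, sub_zero, smul_smul,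
      inv_mul_cancel₀ hT.ne', one_smul]
  have hbound : Φ (u t - T⁻¹ • ∫ s in Icc 0 T, u s) ≤ T⁻¹ * ∫ r in Icc 0 T, Φ (T • u' r) :=
    hmean ▸ hΦconv.map_average_le_of_ae_le hΦdiff.continuous.lowerSemicontinuous
      ((integrable_const _).sub hu_int) (ae_restrict_of_forall_mem measurableSet_Icc fun s hs =>
        map_sub_le_inv_mul_integral hΦconv hΦdiff.continuous hΦnonneg hΦ0 hΦeven hT hu'int hu_eq
          hΦu' hs ht)
  calc ENNReal.ofReal (Φ (u t - T⁻¹ • ∫ s in Icc 0 T, u s))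
      ≤ ENNReal.ofReal (T⁻¹ * ∫ r in Icc 0 T, Φ (T • u' r)) := ENNReal.ofReal_le_ofReal hbound
    _ = ENNReal.ofReal T⁻¹ * rhoE T Φ (fun r => T • u' r) := by
      rw [ENNReal.ofReal_mul (inv_nonneg.2 hT.le),
        ofReal_integral_eq_lintegral_ofReal hΦu' (Eventually.of_forall fun _ => hΦnonneg _)]
      rfl
end
end

section
/- Let Φ : ℝ^d → [0,∞) be an N_∞ function and let L : [0,T]×ℝ^d×ℝ^d → ℝ be measurable in t for each (x,y), continuously differentiable in (x,y) for a.e. t, and satisfy the structure condition (S) with constants λ, Λ > 0. Then for every u ∈ W^1L^Φ([0,T],ℝ^d) with d(u', L^∞) < Λ, the functions t ↦ L(t,u(t),u'(t)), t ↦ |∇_xL(t,u(t),u'(t))| and t ↦ Φ*(∇_yL(t,u(t),u'(t))/λ) all belong to L^1([0,T]); in particular the action integral I(u) = ∫_0^T L(t,u(t),u'(t)) dt is finitely defined on {u ∈ W^1L^Φ : d(u', L^∞) < Λ}. -/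
open MeasureTheory Filter Set
open scoped ENNReal RealInnerProductSpace Topology

noncomputable section

variable {d : ℕ}

/-- The complementary (conjugate) function `Φ*(ζ) = sup_y (y⬝ζ - Φ(y))`. -/
def conjFn (Φ : Ed d → ℝ) (z : Ed d) : ℝ := ⨆ y : Ed d, (⟪y, z⟫ - Φ y)

/-- The Luxemburg distance from `u` to `L^∞([0,T],ℝ^d)`. -/
def distLinf (T : ℝ) (Φ : Ed d → ℝ) (u : ℝ → Ed d) : ℝ :=
  sInf {r : ℝ | ∃ v : ℝ → Ed d, Measurable v ∧ (∃ C : ℝ, ∀ t, ‖v t‖ ≤ C) ∧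
    r = luxNorm T Φ (fun t => u t - v t)}

/-- The Lagrangian `L` is measurable in `t` for each `(x,y)` and continuously
differentiable in `(x,y)` for a.e. `t`. -/
def CaraL (T : ℝ) (L : ℝ → Ed d → Ed d → ℝ) : Prop :=
  (∀ x y, Measurable fun t => L t x y) ∧
    ∀ᵐ t ∂(volume.restrict (Icc (0:ℝ) T)), ContDiff ℝ 1 fun p : Ed d × Ed d => L t p.1 p.2

/-- The structure condition (S). -/
def CondS (T : ℝ) (Φ : Ed d → ℝ) (L : ℝ → Ed d → Ed d → ℝ) (lam Lam : ℝ) : Prop :=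
  ∃ a : Ed d → ℝ, ∃ b : ℝ → ℝ, Continuous a ∧ (∀ x, 0 ≤ a x) ∧
    IntegrableOn b (Icc (0:ℝ) T) ∧ (∀ t, 0 ≤ b t) ∧
    ∀ᵐ t ∂(volume.restrict (Icc (0:ℝ) T)), ∀ x y,
      |L t x y| + ‖gradient (fun x' => L t x' y) x‖ +
          conjFn Φ (lam⁻¹ • gradient (fun y' => L t x y') y) ≤
        a x * (b t + Φ (Lam⁻¹ • y))

/-!
By (S), the three integrands are dominated by `a(u t) * (b t + Φ(u' t / Λ))`. As `u` is continuous
on `[0,T]`, `a ∘ u` is bounded there, so everything reduces to the integrability of `Φ(u'/Λ)`.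
Since `d(u', L^∞) < Λ` there are a bounded `v` and `l < Λ` with `ρ_Φ((u' - v)/l) ≤ 1`;
writing `u'/Λ = θ • (u' - v)/l + (1 - θ) • v/(Λ - l)` with `θ = l/Λ`, convexity bounds
`Φ(u'/Λ)` by `Φ((u' - v)/l) + Φ(v/(Λ - l))`, and the second term is bounded.

Measurability: after changing `L` on a null set of times it is Carathéodory in `(t, (x, y))`,
hence jointly measurable, and so are its partial gradients, which are continuous in `(x, y)` and,
as limits of difference quotients, measurable in `t`.
-/

namespace IsNInf

variable {Φ : Ed d → ℝ}

lemma continuous (hΦ : IsNInf Φ) : Continuous Φ := hΦ.1.continuous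

lemma convexOn (hΦ : IsNInf Φ) : ConvexOn ℝ univ Φ := hΦ.2.1

lemma nonneg (hΦ : IsNInf Φ) (y : Ed d) : 0 ≤ Φ y := hΦ.2.2.1 y

lemma map_zero (hΦ : IsNInf Φ) : Φ 0 = 0 := hΦ.2.2.2.1

lemma map_neg (hΦ : IsNInf Φ) (y : Ed d) : Φ (-y) = Φ y := hΦ.2.2.2.2.2.1 y

lemma tendsto_div_norm_cocompact (hΦ : IsNInf Φ) :
    Tendsto (fun y => Φ y / ‖y‖) (cocompact (Ed d)) atTop := by
  rw [← Metric.cobounded_eq_cocompact, ← comap_norm_atTop]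
  exact hΦ.2.2.2.2.2.2

lemma map_smul_le (hΦ : IsNInf Φ) {c : ℝ} (h0 : 0 ≤ c) (h1 : c ≤ 1) (y : Ed d) :
    Φ (c • y) ≤ c * Φ y := by
  simpa [hΦ.map_zero] using
    hΦ.convexOn.2 (mem_univ y) (mem_univ 0) h0 (sub_nonneg.2 h1) (add_sub_cancel c 1)

lemma map_convexComb_le_add (hΦ : IsNInf Φ) {θ : ℝ} (h0 : 0 ≤ θ) (h1 : θ ≤ 1)
    (x y : Ed d) : Φ (θ • x + (1 - θ) • y) ≤ Φ x + Φ y := by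
  have := hΦ.convexOn.2 (mem_univ x) (mem_univ y) h0 (sub_nonneg.2 h1) (add_sub_cancel θ 1)
  simp only [smul_eq_mul] at this
  nlinarith [hΦ.nonneg x, hΦ.nonneg y]

lemma exists_bound_of_norm_le (hΦ : IsNInf Φ) (r : ℝ) :
    ∃ M, ∀ y : Ed d, ‖y‖ ≤ r → Φ y ≤ M := by
  obtain ⟨M, hM⟩ :=
    (isCompact_closedBall (0 : Ed d) r).bddAbove_image hΦ.continuous.continuousOn
  exact ⟨M, fun y hy => hM ⟨y, by simpa using hy, rfl⟩⟩

lemma bddAbove_range_inner_sub (hΦ : IsNInf Φ) (z : Ed d) :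
    BddAbove (range fun y : Ed d => ⟪y, z⟫ - Φ y) := by
  have hcont : Continuous fun y : Ed d => ⟪y, z⟫ - Φ y :=
    (continuous_id.inner continuous_const).sub hΦ.continuous
  have hfar : ∀ᶠ y in cocompact (Ed d), ⟪y, z⟫ - Φ y ≤ ⟪0, z⟫ - Φ 0 := by
    filter_upwards [hΦ.tendsto_div_norm_cocompact.eventually_ge_atTop ‖z‖,
      tendsto_norm_cocompact_atTop.eventually_gt_atTop 0] with y hΦy hy
    rw [le_div_iff₀ hy] at hΦy
    rw [inner_zero_left, hΦ.map_zero]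
    linarith [real_inner_le_norm y z]
  obtain ⟨y₀, hy₀⟩ := hcont.exists_forall_ge' 0 hfar
  exact ⟨_, forall_mem_range.2 hy₀⟩

lemma conjFn_nonneg (hΦ : IsNInf Φ) (z : Ed d) : 0 ≤ conjFn Φ z := by
  simpa [conjFn, hΦ.map_zero] using le_ciSup (hΦ.bddAbove_range_inner_sub z) 0

lemma convexOn_conjFn (hΦ : IsNInf Φ) : ConvexOn ℝ univ (conjFn Φ) := by
  refine ⟨convex_univ, fun z₁ _ z₂ _ a b ha hb hab => ciSup_le fun y => ?_⟩
  have hsplit :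
      ⟪y, a • z₁ + b • z₂⟫ - Φ y = a * (⟪y, z₁⟫ - Φ y) + b * (⟪y, z₂⟫ - Φ y) := by
    rw [inner_add_right, real_inner_smul_right, real_inner_smul_right]
    linear_combination Φ y * hab
  rw [hsplit, smul_eq_mul, smul_eq_mul]
  gcongr
  · exact le_ciSup (hΦ.bddAbove_range_inner_sub z₁) y
  · exact le_ciSup (hΦ.bddAbove_range_inner_sub z₂) y

lemma continuous_conjFn (hΦ : IsNInf Φ) : Continuous (conjFn Φ) :=
  continuousOn_univ.1 (hΦ.convexOn_conjFn.continuousOn isOpen_univ)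

end IsNInf

section Measurability

variable {α E F : Type*} [MeasurableSpace α] [NormedAddCommGroup E] [NormedAddCommGroup F]

lemma measurable_fderiv_apply_of_differentiable [NormedSpace ℝ E] {G : α → E → ℝ}
    (hmeas : ∀ x, Measurable fun t => G t x) (hdiff : ∀ t, Differentiable ℝ (G t)) (x v : E) :
    Measurable fun t => fderiv ℝ (G t) x v := by
  have hseq : Tendsto (fun n : ℕ => ((n : ℝ) + 1)⁻¹) atTop (𝓝[≠] 0) :=
    tendsto_nhdsWithin_iff.2 ⟨tendsto_one_div_add_atTop_nhds_zero_nat.congr fun n => one_div _,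
      Eventually.of_forall fun n => inv_ne_zero (by positivity)⟩
  refine measurable_of_tendsto_metrizable' atTop
    (f := fun (n : ℕ) t => slope (fun s : ℝ => G t (x + s • v)) 0 ((n : ℝ) + 1)⁻¹)
    (fun n => ?_) (tendsto_pi_nhds.2 fun t => ?_)
  · simp only [slope_def_module]
    exact ((hmeas _).sub (hmeas _)).const_smul (((n : ℝ) + 1)⁻¹ - 0)⁻¹
  · have hline : HasDerivAt (fun s : ℝ => x + s • v) v 0 := by
      simpa using ((hasDerivAt_id (0 : ℝ)).smul_const v).const_add x
    have hderiv : HasDerivAt (fun s : ℝ => G t (x + s • v)) (fderiv ℝ (G t) x v) 0 := by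
      have hG : HasFDerivAt (G t) (fderiv ℝ (G t) x) (x + (0 : ℝ) • v) := by
        simpa using (hdiff t x).hasFDerivAt
      exact hG.comp_hasDerivAt (0 : ℝ) hline
    exact (hasDerivAt_iff_tendsto_slope.1 hderiv).comp hseq

lemma measurable_gradient_of_differentiable [InnerProductSpace ℝ E] [FiniteDimensional ℝ E]
    [MeasurableSpace E] [BorelSpace E] {G : α → E → ℝ}
    (hmeas : ∀ x, Measurable fun t => G t x) (hdiff : ∀ t, Differentiable ℝ (G t)) (x : E) :
    Measurable fun t => gradient (G t) x := by
  let b := stdOrthonormalBasis ℝ E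
  have hexp : ∀ t, gradient (G t) x = ∑ i, fderiv ℝ (G t) x (b i) • b i := fun t => by
    conv_lhs => rw [← b.sum_repr' (gradient (G t) x)]
    simp_rw [real_inner_comm (gradient (G t) x), gradient, InnerProductSpace.toDual_symm_apply]
  simp_rw [hexp]
  exact Finset.measurable_sum _ fun i _ =>
    (measurable_fderiv_apply_of_differentiable hmeas hdiff x (b i)).smul_const _

lemma continuous_gradient_fst_of_contDiff [InnerProductSpace ℝ E] [CompleteSpace E]
    [NormedSpace ℝ F] {G : E × F → ℝ} (hG : ContDiff ℝ 1 G) :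
    Continuous fun p : E × F => gradient (fun x => G (x, p.2)) p.1 := by
  have heq : ∀ p : E × F, gradient (fun x => G (x, p.2)) p.1 =
      (InnerProductSpace.toDual ℝ E).symm ((fderiv ℝ G p).comp (.inl ℝ E F)) := fun p => by
    rw [gradient]
    congr 1
    exact ((hG.differentiable one_ne_zero p).hasFDerivAt.comp p.1
      (hasFDerivAt_prodMk_left p.1 p.2)).fderiv
  simp_rw [heq]
  exact (InnerProductSpace.toDual ℝ E).symm.continuous.comp
    ((hG.continuous_fderiv one_ne_zero).clm_comp continuous_const)

lemma measurable_uncurry_gradient_fst [InnerProductSpace ℝ E] [FiniteDimensional ℝ E]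
    [MeasurableSpace E] [BorelSpace E] [NormedSpace ℝ F] [FiniteDimensional ℝ F]
    [MeasurableSpace F] [BorelSpace F] {G : α → E × F → ℝ}
    (hmeas : ∀ p, Measurable fun t => G t p) (hG : ∀ t, ContDiff ℝ 1 (G t)) :
    Measurable (Function.uncurry fun (p : E × F) t => gradient (fun x => G t (x, p.2)) p.1) :=
  measurable_uncurry_of_continuous_of_measurable
    (fun t => continuous_gradient_fst_of_contDiff (hG t))
    (fun p => measurable_gradient_of_differentiable (fun x => hmeas (x, p.2))
      (fun t => ((hG t).differentiable one_ne_zero).comp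
        (differentiable_id.prodMk (differentiable_const _))) p.1)

end Measurability

namespace CaraL

variable {T : ℝ} {L : ℝ → Ed d → Ed d → ℝ}

lemma exists_contDiff_ae_eq (hL : CaraL T L) :
    ∃ L₀ : ℝ → Ed d × Ed d → ℝ, (∀ p, Measurable fun t => L₀ t p) ∧
      (∀ t, ContDiff ℝ 1 (L₀ t)) ∧
      ∀ᵐ t ∂(volume.restrict (Icc (0:ℝ) T)), L₀ t = fun p => L t p.1 p.2 := by
  classical
  obtain ⟨N, hN, hNmeas, hN0⟩ := exists_measurable_superset_of_null (ae_iff.1 hL.2)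
  refine ⟨fun t p => if t ∈ N then 0 else L t p.1 p.2,
    fun p => Measurable.ite hNmeas measurable_const (hL.1 p.1 p.2), fun t => ?_, ?_⟩
  · by_cases ht : t ∈ N
    · simpa [ht] using contDiff_const
    · simpa [ht] using not_not.1 (mt (@hN t) ht)
  · filter_upwards [measure_eq_zero_iff_ae_notMem.1 hN0] with t ht
    simp [ht]

lemma aemeasurable_comp (hL : CaraL T L) {u u' : ℝ → Ed d}
    (hu : AEMeasurable u (volume.restrict (Icc (0:ℝ) T)))
    (hu' : AEMeasurable u' (volume.restrict (Icc (0:ℝ) T))) :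
    AEMeasurable (fun t => L t (u t) (u' t)) (volume.restrict (Icc (0:ℝ) T)) ∧
      AEMeasurable (fun t => gradient (fun x' => L t x' (u' t)) (u t))
        (volume.restrict (Icc (0:ℝ) T)) ∧
      AEMeasurable (fun t => gradient (fun y' => L t (u t) y') (u' t))
        (volume.restrict (Icc (0:ℝ) T)) := by
  obtain ⟨L₀, hmeas, hC1, hae⟩ := hL.exists_contDiff_ae_eq
  have hpair := (hu.prodMk hu').prodMk aemeasurable_id
  have hpair' := (hu'.prodMk hu).prodMk aemeasurable_id
  have hL₀ := measurable_uncurry_of_continuous_of_measurable (fun t => (hC1 t).continuous) hmeas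
  have hL₀x := measurable_uncurry_gradient_fst hmeas hC1
  -- the `y`-gradient of `L₀` is the `x`-gradient of `L₀` with its arguments swapped
  have hL₀y := measurable_uncurry_gradient_fst (G := fun t q => L₀ t (q.2, q.1))
    (fun q => hmeas _) fun t => (hC1 t).comp (contDiff_snd.prodMk contDiff_fst)
  refine ⟨(hL₀.comp_aemeasurable hpair).congr ?_, (hL₀x.comp_aemeasurable hpair).congr ?_,
    (hL₀y.comp_aemeasurable hpair').congr ?_⟩
  all_goals filter_upwards [hae] with t ht
  all_goals simp [ht]

end CaraL

section Orlicz

variable {T : ℝ} {Φ : Ed d → ℝ}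

lemma rhoE_lt_top_of_norm_le (hΦ : IsNInf Φ) {v : ℝ → Ed d} {C : ℝ}
    (hv : ∀ t, ‖v t‖ ≤ C) : rhoE T Φ v < ⊤ := by
  obtain ⟨M, hM⟩ := hΦ.exists_bound_of_norm_le C
  calc rhoE T Φ v ≤ ∫⁻ _ in Icc (0:ℝ) T, ENNReal.ofReal M :=
        lintegral_mono fun t => ENNReal.ofReal_le_ofReal (hM _ (hv t))
    _ < ⊤ := by
        rw [setLIntegral_const, Real.volume_Icc]
        exact ENNReal.mul_lt_top ENNReal.ofReal_lt_top ENNReal.ofReal_lt_top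

lemma rhoE_smul_le_s13 (hΦ : IsNInf Φ) {c : ℝ} (h0 : 0 ≤ c) (h1 : c ≤ 1) (f : ℝ → Ed d) :
    rhoE T Φ (fun t => c • f t) ≤ ENNReal.ofReal c * rhoE T Φ f := by
  rw [rhoE, rhoE, ← lintegral_const_mul' _ _ ENNReal.ofReal_ne_top]
  refine lintegral_mono fun t => ?_
  rw [← ENNReal.ofReal_mul h0]
  exact ENNReal.ofReal_le_ofReal (hΦ.map_smul_le h0 h1 _)

lemma rhoE_smul_lt_top_of_le (hΦ : IsNInf Φ) {f : ℝ → Ed d} {l k : ℝ} (hl : 0 ≤ l)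
    (hk : 0 < k) (hlk : l ≤ k) (hf : rhoE T Φ (fun t => k • f t) < ⊤) :
    rhoE T Φ (fun t => l • f t) < ⊤ := by
  have heq : (fun t => l • f t) = fun t => (l / k) • (k • f t) := by
    funext t
    rw [smul_smul, div_mul_cancel₀ _ hk.ne']
  rw [heq]
  exact (rhoE_smul_le_s13 hΦ (by positivity) ((div_le_one hk).2 hlk) _).trans_lt
    (ENNReal.mul_lt_top ENNReal.ofReal_lt_top hf)

lemma rhoE_le_add (hΦ : IsNInf Φ) {f g h : ℝ → Ed d}
    (hf : AEMeasurable f (volume.restrict (Icc (0:ℝ) T)))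
    (hfgh : ∀ t, Φ (h t) ≤ Φ (f t) + Φ (g t)) :
    rhoE T Φ h ≤ rhoE T Φ f + rhoE T Φ g := by
  calc rhoE T Φ h
      ≤ ∫⁻ t in Icc (0:ℝ) T, (ENNReal.ofReal (Φ (f t)) + ENNReal.ofReal (Φ (g t))) :=
        lintegral_mono fun t => (ENNReal.ofReal_le_ofReal (hfgh t)).trans ENNReal.ofReal_add_le
    _ = rhoE T Φ f + rhoE T Φ g :=
        lintegral_add_left' (hΦ.continuous.measurable.comp_aemeasurable hf).ennreal_ofReal _

lemma integrableOn_of_rhoE_lt_top (hΦ : IsNInf Φ) {f : ℝ → Ed d}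
    (hf : AEMeasurable f (volume.restrict (Icc (0:ℝ) T))) (h : rhoE T Φ f < ⊤) :
    IntegrableOn (fun t => Φ (f t)) (Icc (0:ℝ) T) :=
  ⟨(hΦ.continuous.measurable.comp_aemeasurable hf).aestronglyMeasurable,
    (hasFiniteIntegral_iff_ofReal (Eventually.of_forall fun _ => hΦ.nonneg _)).2 h⟩

lemma memLphi_of_norm_le (hΦ : IsNInf Φ) {v : ℝ → Ed d}
    (hv : AEMeasurable v (volume.restrict (Icc (0:ℝ) T))) {C : ℝ}
    (hC : ∀ t, ‖v t‖ ≤ C) : MemLphi T Φ v :=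
  ⟨hv, 1, one_pos, by simpa using rhoE_lt_top_of_norm_le hΦ hC⟩

namespace MemLphi

lemma sub (hΦ : IsNInf Φ) {f g : ℝ → Ed d} (hf : MemLphi T Φ f) (hg : MemLphi T Φ g) :
    MemLphi T Φ (fun t => f t - g t) := by
  obtain ⟨hfm, l₁, hl₁, hf⟩ := hf
  obtain ⟨hgm, l₂, hl₂, hg⟩ := hg
  set l := min l₁ l₂
  have hl : 0 < l := lt_min hl₁ hl₂
  refine ⟨hfm.sub hgm, l / 2, by positivity, ?_⟩
  calc rhoE T Φ (fun t => (l / 2) • (f t - g t))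
      ≤ rhoE T Φ (fun t => l • f t) + rhoE T Φ (fun t => l • g t) := by
        refine rhoE_le_add hΦ (hfm.const_smul l) fun t => ?_
        have := hΦ.map_convexComb_le_add (θ := 1 / 2) (by norm_num) (by norm_num)
          (l • f t) (-(l • g t))
        rw [hΦ.map_neg] at this
        convert this using 2
        module
    _ < ⊤ := ENNReal.add_lt_top.2
        ⟨rhoE_smul_lt_top_of_le hΦ hl.le hl₁ (min_le_left _ _) hf,
          rhoE_smul_lt_top_of_le hΦ hl.le hl₂ (min_le_right _ _) hg⟩

lemma exists_rhoE_inv_smul_le_one_s13 (hΦ : IsNInf Φ) {f : ℝ → Ed d} (hf : MemLphi T Φ f) :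
    ∃ l : ℝ, 0 < l ∧ rhoE T Φ (fun t => l⁻¹ • f t) ≤ 1 := by
  obtain ⟨-, l₀, hl₀, hfin⟩ := hf
  set K : ℝ := (rhoE T Φ fun t => l₀ • f t).toReal
  have hK : 0 ≤ K := ENNReal.toReal_nonneg
  set c : ℝ := (K + 1)⁻¹
  have hc : 0 < c := by positivity
  refine ⟨(c * l₀)⁻¹, by positivity, ?_⟩
  have heq : (fun t => (c * l₀)⁻¹⁻¹ • f t) = fun t => c • (l₀ • f t) := by
    funext t
    rw [inv_inv, smul_smul]
  rw [heq]
  calc _ ≤ ENNReal.ofReal c * rhoE T Φ (fun t => l₀ • f t) :=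
        rhoE_smul_le_s13 hΦ hc.le (inv_le_one_of_one_le₀ (by linarith)) _
    _ = ENNReal.ofReal (c * K) := by rw [ENNReal.ofReal_mul hc.le, ENNReal.ofReal_toReal hfin.ne]
    _ ≤ 1 := ENNReal.ofReal_le_one.2 <| by
        rw [inv_mul_le_iff₀ (by positivity)]
        linarith

/-- Membership in `L^Φ` is what makes the infimum in `luxNorm` informative (`sInf ∅ = 0`). -/
lemma exists_rhoE_inv_smul_le_one_of_luxNorm_lt (hΦ : IsNInf Φ) {f : ℝ → Ed d}
    (hf : MemLphi T Φ f) {r : ℝ} (hr : luxNorm T Φ f < r) :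
    ∃ l : ℝ, 0 < l ∧ l < r ∧ rhoE T Φ (fun t => l⁻¹ • f t) ≤ 1 := by
  obtain ⟨l, hl, hρ⟩ := hf.exists_rhoE_inv_smul_le_one_s13 hΦ
  obtain ⟨l', ⟨hl', hρ'⟩, hlt⟩ := exists_lt_of_csInf_lt (by exact ⟨l, hl, hρ⟩) hr
  exact ⟨l', hl', hlt, hρ'⟩

lemma rhoE_inv_smul_lt_top_of_distLinf_lt (hΦ : IsNInf Φ) {f : ℝ → Ed d}
    (hf : MemLphi T Φ f) {Λ : ℝ} (h : distLinf T Φ f < Λ) :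
    rhoE T Φ (fun t => Λ⁻¹ • f t) < ⊤ := by
  obtain ⟨_, ⟨v, hv, ⟨C, hC⟩, rfl⟩, hlux⟩ :=
    exists_lt_of_csInf_lt
      (by exact ⟨_, fun _ => 0, measurable_const, ⟨0, fun _ => by simp⟩, rfl⟩) h
  obtain ⟨l, hl, hlΛ, hρ⟩ := (hf.sub hΦ (memLphi_of_norm_le hΦ hv.aemeasurable hC)
    ).exists_rhoE_inv_smul_le_one_of_luxNorm_lt hΦ hlux
  have hΛ : 0 < Λ := hl.trans hlΛ
  have hΛl : 0 < Λ - l := sub_pos.2 hlΛ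
  have hsplit : ∀ t, Λ⁻¹ • f t =
      (l / Λ) • (l⁻¹ • (f t - v t)) + (1 - l / Λ) • ((Λ - l)⁻¹ • v t) := fun t => by
    match_scalars
    · field_simp
    · field_simp
      ring
  have hv' : ∀ t, ‖(Λ - l)⁻¹ • v t‖ ≤ (Λ - l)⁻¹ * C := fun t => by
    rw [norm_smul, Real.norm_of_nonneg (inv_nonneg.2 hΛl.le)]
    exact mul_le_mul_of_nonneg_left (hC t) (inv_nonneg.2 hΛl.le)
  calc rhoE T Φ (fun t => Λ⁻¹ • f t)
      ≤ rhoE T Φ (fun t => l⁻¹ • (f t - v t)) + rhoE T Φ (fun t => (Λ - l)⁻¹ • v t) :=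
        rhoE_le_add hΦ ((hf.1.sub hv.aemeasurable).const_smul l⁻¹) fun t => by
          rw [hsplit]
          exact hΦ.map_convexComb_le_add (by positivity) ((div_le_one hΛ).2 hlΛ.le) _ _
    _ < ⊤ := ENNReal.add_lt_top.2
        ⟨hρ.trans_lt ENNReal.one_lt_top, rhoE_lt_top_of_norm_le hΦ hv'⟩

end MemLphi

end Orlicz

lemma MemW1Lphi.continuousOn {T : ℝ} {Φ : Ed d → ℝ} {u u' : ℝ → Ed d}
    (hu : MemW1Lphi T Φ u u') : ContinuousOn u (Icc (0:ℝ) T) := by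
  have hprim : ContinuousOn (fun t => u 0 + ∫ s in Ioc 0 t, u' s) (Icc (0:ℝ) T) :=
    continuousOn_const.add (intervalIntegral.continuousOn_primitive hu.1)
  exact hprim.congr fun t ht => by rw [hu.2.2 t ht, intervalIntegral.integral_of_le ht.1]

lemma integrable_of_abs_add_norm_add_le {α E : Type*} [MeasurableSpace α] {μ : Measure α}
    [NormedAddCommGroup E] {f h F : α → ℝ} {g : α → E} (hF : Integrable F μ)
    (hf : AEStronglyMeasurable f μ) (hg : AEStronglyMeasurable g μ)
    (hh : AEStronglyMeasurable h μ) (h0 : ∀ᵐ t ∂μ, 0 ≤ h t)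
    (hle : ∀ᵐ t ∂μ, |f t| + ‖g t‖ + h t ≤ F t) :
    Integrable f μ ∧ Integrable g μ ∧ Integrable h μ := by
  refine ⟨hF.mono' hf ?_, hF.mono' hg ?_, hF.mono' hh ?_⟩ <;>
    filter_upwards [h0, hle] with t h0 hle
  · linarith [Real.norm_eq_abs (f t), norm_nonneg (g t)]
  · linarith [abs_nonneg (f t)]
  · linarith [Real.norm_of_nonneg h0, abs_nonneg (f t), norm_nonneg (g t)]

theorem statement13_general {d : ℕ} (T : ℝ) (Φ : Ed d → ℝ) (hΦ : IsNInf Φ)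
    (L : ℝ → Ed d → Ed d → ℝ) (lam Lam : ℝ)
    (hLC : CaraL T L) (hLS : CondS T Φ L lam Lam)
    (u u' : ℝ → Ed d) (hu : MemW1Lphi T Φ u u') (hdist : distLinf T Φ u' < Lam) :
    IntegrableOn (fun t => L t (u t) (u' t)) (Icc (0:ℝ) T) ∧
      IntegrableOn (fun t => gradient (fun x' => L t x' (u' t)) (u t)) (Icc (0:ℝ) T) ∧
      IntegrableOn (fun t => conjFn Φ (lam⁻¹ • gradient (fun y' => L t (u t) y') (u' t)))
        (Icc (0:ℝ) T) := by
  obtain ⟨a, b, ha, -, hb, hb0, hS⟩ := hLS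
  have hu'Φ := hu.2.1
  obtain ⟨A, hA⟩ :=
    isCompact_Icc.exists_bound_of_continuousOn (ha.comp_continuousOn hu.continuousOn)
  have hdom : IntegrableOn (fun t => A * (b t + Φ (Lam⁻¹ • u' t))) (Icc (0:ℝ) T) :=
    (hb.add (integrableOn_of_rhoE_lt_top hΦ (hu'Φ.1.const_smul Lam⁻¹)
      (hu'Φ.rhoE_inv_smul_lt_top_of_distLinf_lt hΦ hdist))).const_mul A
  have hbound : ∀ᵐ t ∂(volume.restrict (Icc (0:ℝ) T)),
      |L t (u t) (u' t)| + ‖gradient (fun x' => L t x' (u' t)) (u t)‖ +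
        conjFn Φ (lam⁻¹ • gradient (fun y' => L t (u t) y') (u' t)) ≤
      A * (b t + Φ (Lam⁻¹ • u' t)) := by
    filter_upwards [hS, ae_restrict_mem measurableSet_Icc] with t hSt ht
    exact (hSt (u t) (u' t)).trans (mul_le_mul_of_nonneg_right
      ((le_abs_self _).trans (hA t ht)) (add_nonneg (hb0 t) (hΦ.nonneg _)))
  obtain ⟨hL, hLx, hLy⟩ :=
    hLC.aemeasurable_comp (hu.continuousOn.aemeasurable measurableSet_Icc) hu'Φ.1
  have hconj := hΦ.continuous_conjFn.measurable.comp_aemeasurable (hLy.const_smul lam⁻¹)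
  exact integrable_of_abs_add_norm_add_le hdom hL.aestronglyMeasurable hLx.aestronglyMeasurable
    hconj.aestronglyMeasurable (Eventually.of_forall fun _ => hΦ.conjFn_nonneg _) hbound

/-- If the Lagrangian `L` satisfies the structure condition (S), then
for every `u ∈ W^1L^Φ` with `d(u', L^∞) < Λ` the functions `t ↦ L(t,u,u')`,
`t ↦ ∇ₓL(t,u,u')` and `t ↦ Φ*(∇_yL(t,u,u')/λ)` are integrable on `[0,T]`; in
particular the action integral is finitely defined there. -/
theorem statement13 {d : ℕ} (T : ℝ) (hT : 0 < T) (Φ : Ed d → ℝ) (hΦ : IsNInf Φ)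
    (L : ℝ → Ed d → Ed d → ℝ) (lam Lam : ℝ) (hlam : 0 < lam) (hLam : 0 < Lam)
    (hLC : CaraL T L) (hLS : CondS T Φ L lam Lam)
    (u u' : ℝ → Ed d) (hu : MemW1Lphi T Φ u u') (hdist : distLinf T Φ u' < Lam) :
    IntegrableOn (fun t => L t (u t) (u' t)) (Icc (0:ℝ) T) ∧
      IntegrableOn (fun t => gradient (fun x' => L t x' (u' t)) (u t)) (Icc (0:ℝ) T) ∧
      IntegrableOn (fun t => conjFn Φ (lam⁻¹ • gradient (fun y' => L t (u t) y') (u' t)))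
        (Icc (0:ℝ) T) :=
  statement13_general T Φ hΦ L lam Lam hLC hLS u u' hu hdist
end
end
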